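/- arXiv:1904.03642 — 4 statements merged into one kernel-verified Lean document; each statement's English description precedes it below -/
import Mathlib

section
/- Let X, Y, Z be Polish spaces and let (z,x) ↦ f_z(x) be a Borel measurable map from Z × X to Y. Suppose there exists a jointly Borel measurable map (y,z) ↦ μ_z^y from Y × Z to P(X) such that μ_z^y(f_z^{-1}(y)) = 1 for all y ∈ Y and z ∈ Z. Then there exists a Borel measurable map g : Z × Y → X such that f_z(g(z,y)) = y for all y ∈ Y and z ∈ Z. -/
/-!
Sending `(z, x)` to `F (z, x) = (z, f (z, x))`, it suffices to find a measurable right inverse of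
the Borel map `F : Z × X → Z × Y` when every fibre `F ⁻¹' {t}` has positive mass under a measurable
family of measures `η t`. Refining the Polish topology of `Z × X` makes `F` continuous, so the
fibres become closed. Inside a closed set of positive mass a point is then located by successive
localisation: at step `n` intersect with the first closed ball of radius `2⁻ⁿ`, centred on a fixed
dense sequence, that still has positive mass. Choosing the *first* such ball makes the centres
measurable in `t`, and by Cantor's intersection theorem they converge to a point of the fibre.
-/

open MeasureTheory Filter Topology

/-- The Borel σ-algebra on the space of Borel probability measures
equipped with the weak topology. -/
@[local instance]
noncomputable def probabilityMeasureBorel (α : Type*) [MeasurableSpace α] [TopologicalSpace α]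
    [OpensMeasurableSpace α] : MeasurableSpace (ProbabilityMeasure α) := borel _

open ProbabilityTheory Metric Set
open scoped ENNReal

theorem measurable_probabilityMeasure_toMeasure {X : Type*} [TopologicalSpace X]
    [HasOuterApproxClosed X] [MeasurableSpace X] [BorelSpace X] :
    Measurable fun μ : ProbabilityMeasure X => (μ : Measure X) := by
  have : BorelSpace (ProbabilityMeasure X) := ⟨rfl⟩
  refine .measure_of_isPiSystem_of_isProbabilityMeasure
    (BorelSpace.measurable_eq.trans borel_eq_generateFrom_isClosed) isPiSystem_isClosed
    fun F hF => measurable_of_tendsto_metrizable (fun n => ?_) <| tendsto_pi_nhds.2 fun μ =>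
      HasOuterApproxClosed.tendsto_lintegral_apprSeq hF (μ : Measure X)
  have h : ∀ μ : ProbabilityMeasure X, ∫⁻ x, (hF.apprSeq n x : ℝ≥0∞) ∂(μ : Measure X)
      = μ.toFiniteMeasure.testAgainstNN (hF.apprSeq n) := fun μ => by
    rw [FiniteMeasure.testAgainstNN_coe_eq]
    rfl
  simp_rw [h]
  exact (ENNReal.continuous_coe.comp
    (ProbabilityMeasure.continuous_testAgainstNN_eval _)).measurable

theorem exists_forall_mem_tendsto_of_subset_closedBall {Ω : Type*} [PseudoMetricSpace Ω]
    [CompleteSpace Ω] {D : ℕ → Set Ω} (hD : Antitone D) (hD_closed : ∀ n, IsClosed (D n))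
    (hD_ne : ∀ n, (D n).Nonempty) {c : ℕ → Ω} {r : ℕ → ℝ} (hr : Tendsto r atTop (𝓝 0))
    (hDc : ∀ n, D (n + 1) ⊆ closedBall (c n) (r n)) :
    ∃ x, (∀ n, x ∈ D n) ∧ Tendsto c atTop (𝓝 x) := by
  have hr_nonneg : ∀ n, 0 ≤ r n := fun n =>
    nonempty_closedBall.1 ((hD_ne (n + 1)).mono (hDc n))
  have hdiam : ∀ n, diam (D (n + 1)) ≤ 2 * r n := fun n =>
    (diam_mono (hDc n) isBounded_closedBall).trans (diam_closedBall (hr_nonneg n))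
  obtain ⟨x, hx⟩ := nonempty_iInter_of_nonempty_biInter (s := fun n => D (n + 1))
    (fun n => hD_closed _) (fun n => isBounded_closedBall.subset (hDc n))
    (fun N => (hD_ne (N + 1)).mono <| subset_iInter₂ fun n hn => hD (by omega))
    (squeeze_zero (fun n => diam_nonneg) hdiam (by simpa using hr.const_mul 2))
  have hxD : ∀ n, x ∈ D (n + 1) := mem_iInter.1 hx
  refine ⟨x, fun n => hD n.le_succ (hxD n), tendsto_iff_dist_tendsto_zero.2 ?_⟩
  exact squeeze_zero (fun n => dist_nonneg) (fun n => dist_comm (c n) x ▸ hDc n (hxD n)) hr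

section MeasurableSelection

variable {T Ω : Type*} [MeasurableSpace T] [MeasurableSpace Ω]

structure IsCharged (κ : Kernel T Ω) (A : T → Set Ω) : Prop where
  measurableSet_graph : MeasurableSet {p : T × Ω | p.2 ∈ A p.1}
  measure_ne_zero : ∀ t, κ t (A t) ≠ 0

variable {κ : Kernel T Ω} {A : T → Set Ω}

theorem IsCharged.nonempty (hA : IsCharged κ A) (t : T) : (A t).Nonempty :=
  nonempty_of_measure_ne_zero (hA.measure_ne_zero t)

section PseudoMetricSpace

variable [PseudoMetricSpace Ω]

theorem IsCharged.exists_inter_closedBall (hA : IsCharged κ A) {u : ℕ → Ω} (hu : DenseRange u)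
    {r : ℝ} (hr : 0 < r) (t : T) : ∃ j, κ t (A t ∩ closedBall (u j) r) ≠ 0 := by
  have hcover : A t ⊆ ⋃ j, A t ∩ closedBall (u j) r := fun x hx =>
    let ⟨j, hj⟩ := hu.exists_dist_lt x hr
    mem_iUnion.2 ⟨j, hx, mem_closedBall.2 hj.le⟩
  exact (exists_measure_pos_of_not_measure_iUnion_null fun h =>
    hA.measure_ne_zero t (measure_mono_null hcover h)).imp fun _ => ne_of_gt

theorem IsCharged.exists_measurable_inter_closedBall [OpensMeasurableSpace Ω] [IsSFiniteKernel κ]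
    [TopologicalSpace.SeparableSpace Ω] [Nonempty Ω] (hA : IsCharged κ A) {r : ℝ} (hr : 0 < r) :
    ∃ c : T → Ω, Measurable c ∧ IsCharged κ fun t => A t ∩ closedBall (c t) r := by
  classical
  set u := TopologicalSpace.denseSeq Ω
  have hex := hA.exists_inter_closedBall (TopologicalSpace.denseRange_denseSeq Ω) hr
  have hcharged_ball : ∀ j, MeasurableSet {t | κ t (A t ∩ closedBall (u j) r) ≠ 0} := fun j =>
    Kernel.measurable_kernel_prodMk_left (hA.measurableSet_graph.inter
      (measurable_snd isClosed_closedBall.measurableSet)) (measurableSet_singleton 0).compl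
  have hc : Measurable fun t => u (Nat.find (hex t)) :=
    measurable_from_nat.comp (measurable_find hex hcharged_ball)
  refine ⟨_, hc, ⟨?_, fun t => Nat.find_spec (hex t)⟩⟩
  exact hA.measurableSet_graph.inter <|
    measurableSet_le (measurable_snd.dist (hc.comp measurable_fst)) measurable_const

end PseudoMetricSpace

theorem IsCharged.exists_measurable_mem [tΩ : TopologicalSpace Ω] [PolishSpace Ω] [BorelSpace Ω]
    [IsSFiniteKernel κ] {C : T → Set Ω}
    (hC : IsCharged κ C) (hC_closed : ∀ t, IsClosed (C t)) :
    ∃ g : T → Ω, Measurable g ∧ ∀ t, g t ∈ C t := by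
  rcases isEmpty_or_nonempty T with hT | ⟨⟨t₀⟩⟩
  · exact ⟨isEmptyElim, measurable_of_empty _, isEmptyElim⟩
  have : Nonempty Ω := ⟨(hC.nonempty t₀).some⟩
  let := TopologicalSpace.upgradeIsCompletelyMetrizable Ω
  set r : ℕ → ℝ := fun n => (1 / 2 : ℝ) ^ n
  have hr : Tendsto r atTop (𝓝 0) :=
    tendsto_pow_atTop_nhds_zero_of_lt_one (by norm_num) (by norm_num)
  choose! c hc using fun n (A : T → Set Ω) (hA : IsCharged κ A) =>
    hA.exists_measurable_inter_closedBall (r := r n) (by positivity)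
  let D : ℕ → T → Set Ω := fun n => Nat.rec C (fun n Dn t => Dn t ∩ closedBall (c n Dn t) (r n)) n
  have hD : ∀ n, IsCharged κ (D n) ∧ ∀ t, IsClosed (D n t) := by
    intro n
    induction n with
    | zero => exact ⟨hC, hC_closed⟩
    | succ n ih => exact ⟨(hc n _ ih.1).2, fun t => (ih.2 t).inter isClosed_closedBall⟩
  have hlim : ∀ t, ∃ x, (∀ n, x ∈ D n t) ∧ Tendsto (fun n => c n (D n) t) atTop (𝓝 x) :=
    fun t => exists_forall_mem_tendsto_of_subset_closedBall
      (antitone_nat_of_succ_le fun n => inter_subset_left) (fun n => (hD n).2 t)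
      (fun n => (hD n).1.nonempty t) hr fun n => inter_subset_right
  choose g hgD hg using hlim
  exact ⟨g, measurable_of_tendsto_metrizable (fun n => (hc n _ (hD n).1).1)
    (tendsto_pi_nhds.2 hg), fun t => hgD t 0⟩

end MeasurableSelection

theorem exists_measurable_rightInverse_of_kernel {S Ω : Type*} [TopologicalSpace S]
    [SecondCountableTopology S] [T2Space S] [MeasurableSpace S] [OpensMeasurableSpace S]
    [tΩ : TopologicalSpace Ω] [PolishSpace Ω] [MeasurableSpace Ω] [BorelSpace Ω] {F : Ω → S}
    (hF : Measurable F) (κ : Kernel S Ω) [IsSFiniteKernel κ] (hκ : ∀ s, κ s (F ⁻¹' {s}) ≠ 0) :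
    ∃ g : S → Ω, Measurable g ∧ Function.RightInverse g F := by
  obtain ⟨τ, hτ, hFτ, hτ_polish⟩ := hF.exists_continuous
  have hτ_borel : @BorelSpace Ω τ _ :=
    ⟨BorelSpace.measurable_eq.trans (borel_eq_borel_of_le (t' := tΩ) hτ_polish ‹_› hτ).symm⟩
  have hgraph : IsCharged κ fun s => F ⁻¹' {s} :=
    ⟨measurableSet_eq_fun (hF.comp measurable_snd) measurable_fst, hκ⟩
  exact IsCharged.exists_measurable_mem (tΩ := τ) hgraph fun s => isClosed_singleton.preimage hFτ

/-- Let X, Y, Z be Polish spaces and let (z,x) ↦ f_z(x) be a Borel measurable map from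
Z × X to Y. Suppose there exists a jointly Borel measurable map (y,z) ↦ μ_z^y from Y × Z
to P(X) such that μ_z^y(f_z^{-1}(y)) = 1 for all y ∈ Y and z ∈ Z. Then there exists a
Borel measurable map g : Z × Y → X such that f_z(g(z,y)) = y for all y ∈ Y and z ∈ Z. -/
theorem stmt5 {X Y Z : Type*}
    [TopologicalSpace X] [PolishSpace X] [MeasurableSpace X] [BorelSpace X]
    [TopologicalSpace Y] [PolishSpace Y] [MeasurableSpace Y] [BorelSpace Y]
    [TopologicalSpace Z] [PolishSpace Z] [MeasurableSpace Z] [BorelSpace Z]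
    (f : Z × X → Y) (hf : Measurable f)
    (κ : Y × Z → ProbabilityMeasure X) (hκ : Measurable κ)
    (hκcond : ∀ y z, (κ (y, z) : Measure X) {x : X | f (z, x) = y} = 1) :
    ∃ g : Z × Y → X, Measurable g ∧ ∀ z y, f (z, g (z, y)) = y := by
  let k : Kernel (Y × Z) X := ⟨fun q => κ q, measurable_probabilityMeasure_toMeasure.comp hκ⟩
  have : IsMarkovKernel k := ⟨fun q => inferInstanceAs (IsProbabilityMeasure (κ q : Measure X))⟩
  let F : Z × X → Z × Y := fun w => (w.1, f w)
  have hF : Measurable F := measurable_fst.prodMk hf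
  -- `η (z, y)` is `κ (y, z)` transported to the slice `{z} × X`.
  let η : Kernel (Z × Y) (Z × X) :=
    Kernel.deterministic Prod.fst measurable_fst ×ₖ k.comap Prod.swap measurable_swap
  obtain ⟨g, hg, hgF⟩ := exists_measurable_rightInverse_of_kernel hF η fun ⟨z, y⟩ => by
    rw [Kernel.prod_apply, Kernel.deterministic_apply, Measure.dirac_prod,
      Measure.map_apply measurable_prodMk_left (hF (measurableSet_singleton _))]
    have hfibre : Prod.mk z ⁻¹' (F ⁻¹' {(z, y)}) = {x | f (z, x) = y} := by
      ext x
      simp [F]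
    rw [hfibre]
    exact (hκcond y z).trans_ne one_ne_zero
  refine ⟨fun t => (g t).2, measurable_snd.comp hg, fun z y => ?_⟩
  obtain ⟨hz, hy⟩ := Prod.ext_iff.1 (hgF (z, y))
  dsimp only [F] at hz hy
  nth_rw 1 [← hz]
  exact hy
end

section
/- Let X and Y be Polish spaces, let h : X × Y → [0,1] be a Borel function, and let μ ∈ P(X), ν ∈ P(Y). Then sup{∫_X φ dμ + ∫_Y ψ dν : φ ∈ C_b(X), ψ ∈ C_b(Y), φ(x) + ψ(y) ≤ h(x,y) for all x,y} equals the same supremum restricted to pairs with 0 ≤ φ ≤ 1 and −1 ≤ ψ ≤ 0. -/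
open MeasureTheory Filter Topology
open scoped ENNReal NNReal BoundedContinuousFunction

/-!
Shifting a pair by a constant, `(φ, ψ) ↦ (φ + a, ψ - a)`, changes neither the constraint
`φ x + ψ y ≤ h (x, y)` nor the value `∫ φ dμ + ∫ ψ dν`. With `a = sup ψ` we get `ψ - a ≤ 0` and,
since `h ≤ 1`, `φ + a ≤ 1`. Clamping then to `φ' = max (φ + a) 0` and `ψ' = max (ψ - a) (-1)`
only raises the value and keeps the constraint, because `h ≥ 0` and `φ + a - 1 ≤ 0`.
Hence every admissible value is dominated by a normalized one, and the suprema agree.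
-/

namespace BoundedContinuousFunction

lemma integral_add_const_le_integral {X : Type*} [TopologicalSpace X] [MeasurableSpace X]
    [OpensMeasurableSpace X] {μ : Measure X} [IsProbabilityMeasure μ] {f g : X →ᵇ ℝ} {a : ℝ}
    (hfg : ∀ x, f x + a ≤ g x) :
    (∫ x, f x ∂μ) + a ≤ ∫ x, g x ∂μ := by
  calc (∫ x, f x ∂μ) + a = ∫ x, (f x + a) ∂μ := by
        rw [integral_add (f.integrable μ) (integrable_const a)]
        simp
    _ ≤ ∫ x, g x ∂μ :=
        integral_mono ((f.integrable μ).add (integrable_const a)) (g.integrable μ) hfg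

lemma exists_normalized_pair_of_add_le {X Y : Type*} [TopologicalSpace X] [TopologicalSpace Y]
    [Nonempty Y] {h : X × Y → ℝ} (hrange : ∀ p, h p ∈ Set.Icc (0 : ℝ) 1)
    {φ : X →ᵇ ℝ} {ψ : Y →ᵇ ℝ} (hφψ : ∀ x y, φ x + ψ y ≤ h (x, y)) :
    ∃ (φ' : X →ᵇ ℝ) (ψ' : Y →ᵇ ℝ) (a : ℝ),
      (∀ x y, φ' x + ψ' y ≤ h (x, y)) ∧ (∀ x, φ' x ∈ Set.Icc (0 : ℝ) 1) ∧
      (∀ y, ψ' y ∈ Set.Icc (-1 : ℝ) 0) ∧ (∀ x, φ x + a ≤ φ' x) ∧ (∀ y, ψ y + -a ≤ ψ' y) := by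
  set a := ⨆ y, ψ y
  have hψa : ∀ y, ψ y ≤ a := le_ciSup ψ.isBounded_range.bddAbove
  have hφa : ∀ x, φ x + a ≤ 1 := fun x ↦ by
    have : a ≤ 1 - φ x := ciSup_le fun y ↦ by linarith [hφψ x y, (hrange (x, y)).2]
    linarith
  refine ⟨(φ + const X a) ⊔ 0, (ψ + const Y (-a)) ⊔ const Y (-1), a,
    fun x y ↦ ?_, fun x ↦ ?_, fun y ↦ ?_, fun x ↦ ?_, fun y ↦ ?_⟩ <;>
    simp only [coe_sup, coe_add, coe_zero, Pi.sup_apply, Pi.add_apply, const_apply, Pi.zero_apply,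
      Set.mem_Icc]
  · have h0 := (hrange (x, y)).1
    simp only [max_add, add_max, max_le_iff]
    refine ⟨⟨?_, ?_⟩, ?_, ?_⟩ <;> linarith [hφψ x y, hφa x, hψa y]
  · exact ⟨le_max_right _ _, max_le (hφa x) zero_le_one⟩
  · exact ⟨le_max_right _ _, max_le (by linarith [hψa y]) (by norm_num)⟩
  · exact le_max_left _ _
  · exact le_max_left _ _

end BoundedContinuousFunction

theorem stmt11_general {X Y : Type*}
    [TopologicalSpace X] [MeasurableSpace X] [BorelSpace X]
    [TopologicalSpace Y] [MeasurableSpace Y] [BorelSpace Y]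
    (h : X × Y → ℝ) (hrange : ∀ p, h p ∈ Set.Icc (0 : ℝ) 1)
    (μ : Measure X) (ν : Measure Y)
    [IsProbabilityMeasure μ] [IsProbabilityMeasure ν] :
    sSup {r : ℝ | ∃ (φ : X →ᵇ ℝ) (ψ : Y →ᵇ ℝ),
        (∀ x y, φ x + ψ y ≤ h (x, y)) ∧ r = (∫ x, φ x ∂μ) + ∫ y, ψ y ∂ν} =
    sSup {r : ℝ | ∃ (φ : X →ᵇ ℝ) (ψ : Y →ᵇ ℝ),
        (∀ x y, φ x + ψ y ≤ h (x, y)) ∧ (∀ x, φ x ∈ Set.Icc (0 : ℝ) 1) ∧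
        (∀ y, ψ y ∈ Set.Icc (-1 : ℝ) 0) ∧ r = (∫ x, φ x ∂μ) + ∫ y, ψ y ∂ν} := by
  have : Nonempty Y := nonempty_of_isProbabilityMeasure ν
  refine csSup_eq_csSup_of_forall_exists_le ?_ ?_
  · rintro r ⟨φ, ψ, hφψ, rfl⟩
    obtain ⟨φ', ψ', a, hφψ', hφ', hψ', hφφ', hψψ'⟩ :=
      BoundedContinuousFunction.exists_normalized_pair_of_add_le hrange hφψ
    refine ⟨_, ⟨φ', ψ', hφψ', hφ', hψ', rfl⟩, ?_⟩
    linarith [BoundedContinuousFunction.integral_add_const_le_integral (μ := μ) hφφ',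
      BoundedContinuousFunction.integral_add_const_le_integral (μ := ν) hψψ']
  · rintro r ⟨φ, ψ, hφψ, -, -, rfl⟩
    exact ⟨_, ⟨φ, ψ, hφψ, rfl⟩, le_rfl⟩

/-- Let X and Y be Polish spaces, h : X × Y → [0,1] a Borel function, and μ ∈ P(X),
ν ∈ P(Y). Then the supremum of ∫ φ dμ + ∫ ψ dν over pairs φ ∈ C_b(X), ψ ∈ C_b(Y) with
φ(x) + ψ(y) ≤ h(x,y) equals the same supremum restricted to pairs with 0 ≤ φ ≤ 1 and
−1 ≤ ψ ≤ 0. -/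
theorem stmt11 {X Y : Type*}
    [TopologicalSpace X] [PolishSpace X] [MeasurableSpace X] [BorelSpace X]
    [TopologicalSpace Y] [PolishSpace Y] [MeasurableSpace Y] [BorelSpace Y]
    (h : X × Y → ℝ) (hmeas : Measurable h) (hrange : ∀ p, h p ∈ Set.Icc (0 : ℝ) 1)
    (μ : Measure X) (ν : Measure Y)
    [IsProbabilityMeasure μ] [IsProbabilityMeasure ν] :
    sSup {r : ℝ | ∃ (φ : X →ᵇ ℝ) (ψ : Y →ᵇ ℝ),
        (∀ x y, φ x + ψ y ≤ h (x, y)) ∧ r = (∫ x, φ x ∂μ) + ∫ y, ψ y ∂ν} =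
    sSup {r : ℝ | ∃ (φ : X →ᵇ ℝ) (ψ : Y →ᵇ ℝ),
        (∀ x y, φ x + ψ y ≤ h (x, y)) ∧ (∀ x, φ x ∈ Set.Icc (0 : ℝ) 1) ∧
        (∀ y, ψ y ∈ Set.Icc (-1 : ℝ) 0) ∧ r = (∫ x, φ x ∂μ) + ∫ y, ψ y ∂ν} :=
  stmt11_general h hrange μ ν
end

section
/- Let X and Y be Polish spaces and let h : X × Y → [0,1] be a lower semicontinuous function. Then for all μ₁, μ₂ ∈ P(X) and ν₁, ν₂ ∈ P(Y) one has |K_h(μ₁, ν₁) − K_h(μ₂, ν₂)| ≤ ‖μ₁ − μ₂‖ + ‖ν₁ − ν₂‖, where ‖·‖ is the total variation norm. -/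
/-!
Jordan-decompose `μ₁ = ξ + p`, `μ₂ = ξ + n` with `‖μ₁ - μ₂‖ = p(X) + n(X)`. Given a coupling `σ`
of `(μ₂, ν)`, the measure `τ = (dξ/dμ₂ ∘ fst) · σ` is a part of `σ` with first marginal `ξ`;
adding to it any coupling of `p` with the part of `ν` that `τ` leaves uncovered gives a coupling
of `(μ₁, ν)`, which costs at most `p(X)` more since `h ≤ 1`. Hence
`K_h(μ₁, ν) ≤ K_h(μ₂, ν) + ‖μ₁ - μ₂‖`; exchanging the factors gives the same in the second
marginal, and chaining the two in both directions gives the claim.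
-/

open MeasureTheory Filter Topology
open scoped ENNReal NNReal

/-- The Kantorovich transportation cost `K_h(μ,ν)`: the infimum of `∫ h dσ` over all
measures `σ` on `X × Y` whose marginals are `μ` and `ν`. -/
noncomputable def transportCost {X Y : Type*} [MeasurableSpace X] [MeasurableSpace Y]
    (h : X × Y → ℝ) (μ : Measure X) (ν : Measure Y) : ℝ≥0∞ :=
  ⨅ σ ∈ {σ : Measure (X × Y) | σ.map Prod.fst = μ ∧ σ.map Prod.snd = ν},
    ∫⁻ p, ENNReal.ofReal (h p) ∂σ

namespace MeasureTheory

variable {α β : Type*} [MeasurableSpace α] [MeasurableSpace β]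

lemma SignedMeasure.totalVariation_sub_comm (s t : SignedMeasure α) :
    (s - t).totalVariation = (t - s).totalVariation := by
  rw [← neg_sub, SignedMeasure.totalVariation_neg]

lemma Measure.exists_add_eq_add_totalVariation (μ₁ μ₂ : Measure α)
    [IsFiniteMeasure μ₁] [IsFiniteMeasure μ₂] :
    ∃ ξ p n : Measure α, IsFiniteMeasure ξ ∧ IsFiniteMeasure p ∧ IsFiniteMeasure n ∧
      μ₁ = ξ + p ∧ μ₂ = ξ + n ∧
      (μ₁.toSignedMeasure - μ₂.toSignedMeasure).totalVariation = p + n := by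
  set s := μ₁.toSignedMeasure - μ₂.toSignedMeasure
  set p := s.toJordanDecomposition.posPart
  set n := s.toJordanDecomposition.negPart
  have hadd : μ₁ + n = μ₂ + p := by
    rw [← Measure.toSignedMeasure_eq_toSignedMeasure_iff, Measure.toSignedMeasure_add,
      Measure.toSignedMeasure_add, add_comm μ₂.toSignedMeasure, ← sub_eq_sub_iff_add_eq_add]
    exact s.toSignedMeasure_toJordanDecomposition.symm
  have hn : n ≤ μ₂ := by
    obtain ⟨S, -, hpS, hnS⟩ := s.toJordanDecomposition.mutuallySingular
    calc n = n.restrict S := (Measure.restrict_eq_self_of_ae_mem (mem_ae_iff.mpr hnS)).symm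
      _ ≤ (μ₁ + n).restrict S := Measure.restrict_mono le_rfl (Measure.le_add_left le_rfl)
      _ = μ₂.restrict S := by
          rw [hadd, Measure.restrict_add, Measure.restrict_eq_zero.mpr hpS, add_zero]
      _ ≤ μ₂ := Measure.restrict_le_self
  have hξ : μ₂ - n + n = μ₂ := Measure.sub_add_cancel_of_le hn
  refine ⟨μ₂ - n, p, n, isFiniteMeasure_of_le μ₂ Measure.sub_le, inferInstance, inferInstance,
    ?_, hξ.symm, rfl⟩
  rw [← Measure.add_left_inj n, hadd, add_right_comm, hξ]

lemma Measure.exists_le_map_fst_eq (σ : Measure (α × β)) [IsFiniteMeasure σ] {ξ : Measure α}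
    (hξ : ξ ≤ σ.map Prod.fst) :
    ∃ τ ≤ σ, τ.map Prod.fst = ξ := by
  have : IsFiniteMeasure ξ := isFiniteMeasure_of_le _ hξ
  refine ⟨σ.withDensity fun q ↦ ξ.rnDeriv (σ.map Prod.fst) q.1, ?_, ?_⟩
  · have hle : ∀ᵐ q ∂σ, ξ.rnDeriv (σ.map Prod.fst) q.1 ≤ 1 :=
      ae_of_ae_map measurable_fst.aemeasurable (Measure.rnDeriv_le_one_of_le hξ)
    exact (withDensity_mono hle).trans_eq withDensity_one
  · ext A hA
    rw [Measure.map_apply measurable_fst hA, withDensity_apply _ (measurable_fst hA),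
      ← setLIntegral_map hA (Measure.measurable_rnDeriv _ _) measurable_fst,
      ← withDensity_apply _ hA,
      Measure.withDensity_rnDeriv_eq _ _ (Measure.absolutelyContinuous_of_le hξ)]

lemma Measure.exists_map_fst_eq_map_snd_eq (a : Measure α) (b : Measure β)
    [IsFiniteMeasure a] [IsFiniteMeasure b] (hab : a Set.univ = b Set.univ) :
    ∃ c : Measure (α × β), c.map Prod.fst = a ∧ c.map Prod.snd = b := by
  rcases eq_or_ne (a Set.univ) 0 with h0 | h0
  · refine ⟨0, ?_, ?_⟩
    · simp [Measure.measure_univ_eq_zero.mp h0]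
    · simp [Measure.measure_univ_eq_zero.mp (hab ▸ h0)]
  · have hcancel : (a Set.univ)⁻¹ * a Set.univ = 1 :=
      ENNReal.inv_mul_cancel h0 (measure_ne_top a _)
    refine ⟨(a Set.univ)⁻¹ • a.prod b, ?_, ?_⟩
    · rw [Measure.map_smul, Measure.map_fst_prod, ← hab, smul_smul, hcancel, one_smul]
    · rw [Measure.map_smul, Measure.map_snd_prod, smul_smul, hcancel, one_smul]

lemma Measure.map_apply_univ {f : α → β} (hf : Measurable f) (μ : Measure α) :
    μ.map f Set.univ = μ Set.univ := by
  rw [Measure.map_apply hf MeasurableSet.univ, Set.preimage_univ]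

lemma lintegral_ofReal_le_measure_univ {μ : Measure α} {f : α → ℝ} (hf : ∀ x, f x ≤ 1) :
    ∫⁻ x, ENNReal.ofReal (f x) ∂μ ≤ μ Set.univ :=
  (lintegral_mono fun x ↦ ENNReal.ofReal_le_one.mpr (hf x)).trans_eq lintegral_one

end MeasureTheory

section transportCost

variable {X Y : Type*} [MeasurableSpace X] [MeasurableSpace Y]

lemma transportCost_le_lintegral {h : X × Y → ℝ} {μ : Measure X} {ν : Measure Y}
    {σ : Measure (X × Y)} (hfst : σ.map Prod.fst = μ) (hsnd : σ.map Prod.snd = ν) :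
    transportCost h μ ν ≤ ∫⁻ q, ENNReal.ofReal (h q) ∂σ :=
  iInf₂_le σ ⟨hfst, hsnd⟩

lemma transportCost_le_add_totalVariation_left {h : X × Y → ℝ} (h1 : ∀ q, h q ≤ 1)
    (μ₁ μ₂ : Measure X) (ν : Measure Y) [IsFiniteMeasure μ₁] [IsFiniteMeasure μ₂]
    (hμ : μ₁ Set.univ = μ₂ Set.univ) :
    transportCost h μ₁ ν ≤
      transportCost h μ₂ ν + (μ₁.toSignedMeasure - μ₂.toSignedMeasure).totalVariation Set.univ := by
  set D := (μ₁.toSignedMeasure - μ₂.toSignedMeasure).totalVariation Set.univ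
  suffices key : ∀ σ : Measure (X × Y), σ.map Prod.fst = μ₂ → σ.map Prod.snd = ν →
      transportCost h μ₁ ν ≤ ∫⁻ q, ENNReal.ofReal (h q) ∂σ + D by
    calc transportCost h μ₁ ν ≤ transportCost h μ₁ ν - D + D := le_tsub_add
      _ ≤ transportCost h μ₂ ν + D := by
        gcongr
        exact le_iInf₂ fun σ hσ ↦ tsub_le_iff_right.mpr (key σ hσ.1 hσ.2)
  intro σ hfst hsnd
  obtain ⟨ξ, p, n, _, _, _, rfl, rfl, hD⟩ := Measure.exists_add_eq_add_totalVariation μ₁ μ₂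
  have : IsFiniteMeasure σ :=
    ⟨by rw [← Measure.map_apply_univ measurable_fst, hfst]; exact measure_lt_top _ _⟩
  have : IsFiniteMeasure ν := hsnd ▸ inferInstance
  obtain ⟨τ, hτσ, hτfst⟩ := Measure.exists_le_map_fst_eq σ (hfst ▸ Measure.le_add_right le_rfl)
  have hντ : τ.map Prod.snd ≤ ν := hsnd ▸ Measure.map_mono hτσ measurable_snd
  have : IsFiniteMeasure (τ.map Prod.snd) := isFiniteMeasure_of_le ν hντ
  have hmass : p Set.univ = (ν - τ.map Prod.snd) Set.univ := by
    rw [Measure.sub_apply MeasurableSet.univ hντ, ← hsnd, Measure.map_apply_univ measurable_snd,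
      Measure.map_apply_univ measurable_snd, ← Measure.map_apply_univ measurable_fst σ,
      ← Measure.map_apply_univ measurable_fst τ, hfst, hτfst, ← hμ, Measure.add_apply,
      ENNReal.add_sub_cancel_left (measure_ne_top _ _)]
  obtain ⟨c, hcfst, hcsnd⟩ := Measure.exists_map_fst_eq_map_snd_eq p _ hmass
  have hcoupling : transportCost h (ξ + p) ν ≤ ∫⁻ q, ENNReal.ofReal (h q) ∂(τ + c) := by
    refine transportCost_le_lintegral ?_ ?_
    · rw [Measure.map_add _ _ measurable_fst, hτfst, hcfst]
    · rw [Measure.map_add _ _ measurable_snd, hcsnd, add_comm, Measure.sub_add_cancel_of_le hντ]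
  calc transportCost h (ξ + p) ν ≤ ∫⁻ q, ENNReal.ofReal (h q) ∂(τ + c) := hcoupling
    _ = ∫⁻ q, ENNReal.ofReal (h q) ∂τ + ∫⁻ q, ENNReal.ofReal (h q) ∂c :=
      lintegral_add_measure _ τ c
    _ ≤ ∫⁻ q, ENNReal.ofReal (h q) ∂σ + c Set.univ :=
      add_le_add (lintegral_mono' hτσ le_rfl) (lintegral_ofReal_le_measure_univ h1)
    _ ≤ ∫⁻ q, ENNReal.ofReal (h q) ∂σ + D := by
      rw [← Measure.map_apply_univ measurable_fst, hcfst]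
      simp only [D, hD, Measure.add_apply]
      gcongr
      exact le_self_add

lemma transportCost_le_swap (h : X × Y → ℝ) (μ : Measure X) (ν : Measure Y) :
    transportCost h μ ν ≤ transportCost (fun q ↦ h q.swap) ν μ := by
  refine le_iInf₂ fun σ hσ ↦ ?_
  calc transportCost h μ ν ≤ ∫⁻ q, ENNReal.ofReal (h q) ∂(σ.map MeasurableEquiv.prodComm) :=
        transportCost_le_lintegral
          ((Measure.map_map measurable_fst MeasurableEquiv.prodComm.measurable).trans hσ.2)
          ((Measure.map_map measurable_snd MeasurableEquiv.prodComm.measurable).trans hσ.1)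
    _ = ∫⁻ q, ENNReal.ofReal (h q.swap) ∂σ := lintegral_map_equiv _ _

lemma transportCost_swap (h : X × Y → ℝ) (μ : Measure X) (ν : Measure Y) :
    transportCost (fun q ↦ h q.swap) ν μ = transportCost h μ ν :=
  le_antisymm (transportCost_le_swap _ ν μ) (transportCost_le_swap h μ ν)

lemma transportCost_le_add_totalVariation_right {h : X × Y → ℝ} (h1 : ∀ q, h q ≤ 1)
    (μ : Measure X) (ν₁ ν₂ : Measure Y) [IsFiniteMeasure ν₁] [IsFiniteMeasure ν₂]
    (hν : ν₁ Set.univ = ν₂ Set.univ) :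
    transportCost h μ ν₁ ≤
      transportCost h μ ν₂ + (ν₁.toSignedMeasure - ν₂.toSignedMeasure).totalVariation Set.univ := by
  simpa only [transportCost_swap] using
    transportCost_le_add_totalVariation_left (fun q ↦ h1 q.swap) ν₁ ν₂ μ hν

lemma transportCost_le_one {h : X × Y → ℝ} (h1 : ∀ q, h q ≤ 1) (μ : Measure X) (ν : Measure Y)
    [IsProbabilityMeasure μ] [IsProbabilityMeasure ν] :
    transportCost h μ ν ≤ 1 :=
  (transportCost_le_lintegral Measure.fst_prod Measure.snd_prod).trans
    ((lintegral_ofReal_le_measure_univ h1).trans_eq measure_univ)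

lemma toReal_transportCost_le {h : X × Y → ℝ} (h1 : ∀ q, h q ≤ 1) (μ₁ μ₂ : Measure X)
    (ν₁ ν₂ : Measure Y) [IsProbabilityMeasure μ₁] [IsProbabilityMeasure μ₂]
    [IsProbabilityMeasure ν₁] [IsProbabilityMeasure ν₂] :
    (transportCost h μ₁ ν₁).toReal ≤ (transportCost h μ₂ ν₂).toReal +
      ((μ₁.toSignedMeasure - μ₂.toSignedMeasure).totalVariation Set.univ).toReal +
      ((ν₁.toSignedMeasure - ν₂.toSignedMeasure).totalVariation Set.univ).toReal := by
  have hle : transportCost h μ₁ ν₁ ≤ transportCost h μ₂ ν₂ +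
      (μ₁.toSignedMeasure - μ₂.toSignedMeasure).totalVariation Set.univ +
      (ν₁.toSignedMeasure - ν₂.toSignedMeasure).totalVariation Set.univ :=
    calc transportCost h μ₁ ν₁
        ≤ transportCost h μ₂ ν₁ +
          (μ₁.toSignedMeasure - μ₂.toSignedMeasure).totalVariation Set.univ :=
          transportCost_le_add_totalVariation_left h1 μ₁ μ₂ ν₁ (by simp)
      _ ≤ _ := by
          rw [add_right_comm]
          gcongr
          exact transportCost_le_add_totalVariation_right h1 μ₂ ν₁ ν₂ (by simp)
  have hfin : transportCost h μ₂ ν₂ ≠ ∞ := ne_top_of_le_ne_top ENNReal.one_ne_top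
    (transportCost_le_one h1 μ₂ ν₂)
  rw [← ENNReal.toReal_add hfin (measure_ne_top _ _)]
  exact ENNReal.toReal_le_add hle (by finiteness) (measure_ne_top _ _)

end transportCost

theorem stmt12_general {X Y : Type*} [MeasurableSpace X] [MeasurableSpace Y]
    (h : X × Y → ℝ) (hrange : ∀ p, h p ∈ Set.Icc (0 : ℝ) 1)
    (μ₁ μ₂ : Measure X) (ν₁ ν₂ : Measure Y)
    [IsProbabilityMeasure μ₁] [IsProbabilityMeasure μ₂]
    [IsProbabilityMeasure ν₁] [IsProbabilityMeasure ν₂] :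
    |(transportCost h μ₁ ν₁).toReal - (transportCost h μ₂ ν₂).toReal| ≤
      ((μ₁.toSignedMeasure - μ₂.toSignedMeasure).totalVariation Set.univ).toReal +
      ((ν₁.toSignedMeasure - ν₂.toSignedMeasure).totalVariation Set.univ).toReal := by
  have h1 : ∀ q, h q ≤ 1 := fun q ↦ (hrange q).2
  have h₁₂ := toReal_transportCost_le h1 μ₁ μ₂ ν₁ ν₂
  have h₂₁ := toReal_transportCost_le h1 μ₂ μ₁ ν₂ ν₁
  rw [SignedMeasure.totalVariation_sub_comm μ₂.toSignedMeasure,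
    SignedMeasure.totalVariation_sub_comm ν₂.toSignedMeasure] at h₂₁
  exact abs_sub_le_iff.mpr ⟨by linarith, by linarith⟩

/-- Let X and Y be Polish spaces and h : X × Y → [0,1] lower semicontinuous. Then for all
probability measures μ₁, μ₂ on X and ν₁, ν₂ on Y one has
|K_h(μ₁, ν₁) − K_h(μ₂, ν₂)| ≤ ‖μ₁ − μ₂‖ + ‖ν₁ − ν₂‖, where ‖·‖ is the total variation
norm. -/
theorem stmt12 {X Y : Type*}
    [TopologicalSpace X] [PolishSpace X] [MeasurableSpace X] [BorelSpace X]
    [TopologicalSpace Y] [PolishSpace Y] [MeasurableSpace Y] [BorelSpace Y]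
    (h : X × Y → ℝ) (hlsc : LowerSemicontinuous h) (hrange : ∀ p, h p ∈ Set.Icc (0 : ℝ) 1)
    (μ₁ μ₂ : Measure X) (ν₁ ν₂ : Measure Y)
    [IsProbabilityMeasure μ₁] [IsProbabilityMeasure μ₂]
    [IsProbabilityMeasure ν₁] [IsProbabilityMeasure ν₂] :
    |(transportCost h μ₁ ν₁).toReal - (transportCost h μ₂ ν₂).toReal| ≤
      ((μ₁.toSignedMeasure - μ₂.toSignedMeasure).totalVariation Set.univ).toReal +
      ((ν₁.toSignedMeasure - ν₂.toSignedMeasure).totalVariation Set.univ).toReal :=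
  stmt12_general h hrange μ₁ μ₂ ν₁ ν₂
end

section
/- Let (T, 𝒯) be a measurable space, let E be a Polish space, and let u_n : T → E be a sequence of 𝒯-measurable maps such that for every t ∈ T the set {u_n(t) : n ∈ ℕ} has compact closure in E. Then there exist 𝒯-measurable functions η_k : T → ℕ such that, for every t, the numbers η_k(t) are strictly increasing in k, the sequence u_{η_k(t)}(t) converges in E as k → ∞ to some point u(t), and the map t ↦ u(t) is 𝒯-measurable. -/
/-!
Fix a dense sequence `x` in a metric for `E`. For each `t`, refine `ℕ` to a decreasing chain of
infinite index sets `S₀ ⊇ S₁ ⊇ ⋯`, where `S_{k+1}` consists of the `n ∈ S_k` with `u n t` in a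
ball of radius `1/(k+1)` around some `x i`: by compactness finitely many such balls cover the
closure of `{u n t}`, so one of them contains `u n t` for infinitely many `n ∈ S_k`. Taking the
least admissible `i`, and then the least admissible `η (k+1) t ∈ S_{k+1}` above `η k t`, makes
every choice a countable Boolean combination of measurable conditions on `t`. The subsequence is
Cauchy and stays in a compact set, hence converges, and the limit is measurable as a pointwise
limit of measurable maps.
-/

open MeasureTheory Filter Topology

section NatValued

variable {T : Type*} [MeasurableSpace T] {A : T → Set ℕ}

theorem measurable_sInf_nat (hA : Measurable A) : Measurable fun t => sInf (A t) := by
  refine measurable_to_countable' fun n => ?_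
  have hpre : (fun t => sInf (A t)) ⁻¹' {n} =
      {t | n ∈ A t ∧ ∀ m < n, m ∉ A t} ∪ {t | n = 0 ∧ ∀ m, m ∉ A t} := by
    ext t
    rcases (A t).eq_empty_or_nonempty with hempty | hne
    · simp [hempty, eq_comm]
    · have : ¬ ∀ m, m ∉ A t := fun h => hne.ne_empty (Set.eq_empty_iff_forall_notMem.2 h)
      simp only [Set.mem_preimage, Set.mem_singleton_iff, Set.mem_union, Set.mem_ofPred_eq, this,
        and_false, or_false]
      refine ⟨fun h => h ▸ ⟨Nat.sInf_mem hne, fun m hm => Nat.notMem_of_lt_sInf hm⟩,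
        fun ⟨hn, hmin⟩ => le_antisymm (Nat.sInf_le hn) ?_⟩
      exact not_lt.1 fun hlt => hmin _ hlt (Nat.sInf_mem hne)
  rw [hpre]
  have hmem (m : ℕ) : Measurable fun t => m ∈ A t := measurable_set_iff.1 hA m
  refine MeasurableSet.union (Measurable.setOf ?_) (Measurable.setOf ?_) <;> fun_prop

theorem measurable_set_infinite (hA : Measurable A) : Measurable fun t => (A t).Infinite := by
  simp_rw [Set.infinite_iff_exists_gt]
  have hmem (m : ℕ) : Measurable fun t => m ∈ A t := measurable_set_iff.1 hA m
  fun_prop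

end NatValued

theorem exists_infinite_setOf_dist_lt {E : Type*} [PseudoMetricSpace E] {y x : ℕ → E}
    (hy : IsCompact (closure (Set.range y))) (hx : DenseRange x)
    {S : Set ℕ} (hS : S.Infinite) {r : ℝ} (hr : 0 < r) :
    ∃ i, {n ∈ S | dist (y n) (x i) < r}.Infinite := by
  have hcover : closure (Set.range y) ⊆ ⋃ i, Metric.ball (x i) r := fun z _ => by
    obtain ⟨i, hi⟩ := Metric.denseRange_iff.1 hx z r hr
    exact Set.mem_iUnion.2 ⟨i, Metric.mem_ball.2 hi⟩
  obtain ⟨I, hI⟩ := hy.elim_finite_subcover _ (fun _ => Metric.isOpen_ball) hcover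
  by_contra! hfin
  refine hS ((I.finite_toSet.biUnion fun i _ => hfin i).subset fun n hn => ?_)
  obtain ⟨i, hi, hn'⟩ := Set.mem_iUnion₂.1 (hI (subset_closure (Set.mem_range_self n)))
  exact Set.mem_iUnion₂.2 ⟨i, hi, hn, Metric.mem_ball.1 hn'⟩

namespace CompactSubseq

variable {E : Type*} [PseudoMetricSpace E]

/-- When no `i` qualifies this is the junk value `sInf ∅ = 0`; for infinite `S` and `y` with
compact closure, `exists_infinite_setOf_dist_lt` rules that out. -/
noncomputable def ballCenter (y x : ℕ → E) (r : ℝ) (S : Set ℕ) : ℕ :=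
  sInf {i | {n ∈ S | dist (y n) (x i) < r}.Infinite}

def ballRefine (y x : ℕ → E) (r : ℝ) (S : Set ℕ) : Set ℕ :=
  {n ∈ S | dist (y n) (x (ballCenter y x r S)) < r}

noncomputable def nestedIndices (y x : ℕ → E) : ℕ → Set ℕ
  | 0 => Set.univ
  | k + 1 => ballRefine y x (1 / (k + 1)) (nestedIndices y x k)

noncomputable def subseqIndex (y x : ℕ → E) : ℕ → ℕ
  | 0 => 0
  | k + 1 => sInf {n ∈ nestedIndices y x (k + 1) | subseqIndex y x k < n}

section Pointwise

variable {y x : ℕ → E}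

theorem ballRefine_subset (r : ℝ) (S : Set ℕ) : ballRefine y x r S ⊆ S :=
  Set.sep_subset _ _

theorem dist_lt_of_mem_ballRefine {r : ℝ} {S : Set ℕ} {m n : ℕ} (hm : m ∈ ballRefine y x r S)
    (hn : n ∈ ballRefine y x r S) : dist (y m) (y n) < 2 * r := by
  linarith [dist_triangle_right (y m) (y n) (x (ballCenter y x r S)), hm.2, hn.2]

theorem ballRefine_infinite (hy : IsCompact (closure (Set.range y))) (hx : DenseRange x)
    {S : Set ℕ} (hS : S.Infinite) {r : ℝ} (hr : 0 < r) : (ballRefine y x r S).Infinite :=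
  Nat.sInf_mem (exists_infinite_setOf_dist_lt hy hx hS hr)

theorem nestedIndices_antitone : Antitone (nestedIndices y x) :=
  antitone_nat_of_succ_le fun _ => ballRefine_subset _ _

theorem nestedIndices_infinite (hy : IsCompact (closure (Set.range y))) (hx : DenseRange x) :
    ∀ k, (nestedIndices y x k).Infinite
  | 0 => Set.infinite_univ
  | k + 1 => ballRefine_infinite hy hx (nestedIndices_infinite hy hx k) Nat.one_div_pos_of_nat

theorem subseqIndex_succ_spec (hy : IsCompact (closure (Set.range y))) (hx : DenseRange x)
    (k : ℕ) : subseqIndex y x (k + 1) ∈ nestedIndices y x (k + 1) ∧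
      subseqIndex y x k < subseqIndex y x (k + 1) :=
  Nat.sInf_mem ((nestedIndices_infinite hy hx (k + 1)).exists_gt _)

theorem subseqIndex_mem (hy : IsCompact (closure (Set.range y))) (hx : DenseRange x) :
    ∀ k, subseqIndex y x k ∈ nestedIndices y x k
  | 0 => Set.mem_univ _
  | k + 1 => (subseqIndex_succ_spec hy hx k).1

theorem strictMono_subseqIndex (hy : IsCompact (closure (Set.range y))) (hx : DenseRange x) :
    StrictMono (subseqIndex y x) :=
  strictMono_nat_of_lt_succ fun k => (subseqIndex_succ_spec hy hx k).2

theorem cauchySeq_comp_subseqIndex (hy : IsCompact (closure (Set.range y))) (hx : DenseRange x) :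
    CauchySeq fun k => y (subseqIndex y x k) := by
  refine Metric.cauchySeq_iff'.2 fun ε hε => ?_
  obtain ⟨k, hk⟩ := exists_nat_one_div_lt (half_pos hε)
  have hmem {n : ℕ} (hn : k + 1 ≤ n) : subseqIndex y x n ∈ nestedIndices y x (k + 1) :=
    nestedIndices_antitone hn (subseqIndex_mem hy hx n)
  refine ⟨k + 1, fun n hn => ?_⟩
  have := dist_lt_of_mem_ballRefine (hmem hn) (hmem le_rfl)
  linarith

theorem exists_tendsto_comp_subseqIndex (hy : IsCompact (closure (Set.range y)))
    (hx : DenseRange x) : ∃ v, Tendsto (fun k => y (subseqIndex y x k)) atTop (𝓝 v) := by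
  obtain ⟨v, -, hv⟩ := cauchySeq_tendsto_of_isComplete hy.isComplete
    (fun k => subset_closure (Set.mem_range_self _)) (cauchySeq_comp_subseqIndex hy hx)
  exact ⟨v, hv⟩

end Pointwise

section Measurability

variable {T : Type*} [MeasurableSpace T] [SecondCountableTopology E] [MeasurableSpace E]
  [OpensMeasurableSpace E] {u : ℕ → T → E} {x : ℕ → E}

theorem measurable_ballRefine (hu : ∀ n, Measurable (u n)) (r : ℝ) {S : T → Set ℕ}
    (hS : Measurable S) : Measurable fun t => ballRefine (fun n => u n t) x r (S t) := by
  have hS' (n : ℕ) : Measurable fun t => n ∈ S t := measurable_set_iff.1 hS n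
  have hcenter : Measurable fun t => ballCenter (fun n => u n t) x r (S t) := by
    refine measurable_sInf_nat <| measurable_set_iff.2 fun i => measurable_set_infinite ?_
    exact measurable_set_iff.2 fun n => by fun_prop
  have hx : Measurable x := measurable_from_nat
  exact measurable_set_iff.2 fun n => by unfold ballRefine; fun_prop

theorem measurable_nestedIndices (hu : ∀ n, Measurable (u n)) :
    ∀ k, Measurable fun t => nestedIndices (fun n => u n t) x k
  | 0 => measurable_const
  | k + 1 => measurable_ballRefine hu _ (measurable_nestedIndices hu k)

theorem measurable_subseqIndex (hu : ∀ n, Measurable (u n)) :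
    ∀ k, Measurable fun t => subseqIndex (fun n => u n t) x k
  | 0 => measurable_const
  | k + 1 => by
    have hprev := measurable_subseqIndex hu k
    have hnested (n : ℕ) := measurable_set_iff.1 (measurable_nestedIndices (x := x) hu (k + 1)) n
    exact measurable_sInf_nat <| measurable_set_iff.2 fun n => by fun_prop

end Measurability

end CompactSubseq

open CompactSubseq in
theorem exists_measurable_subseq_tendsto {T E : Type*} [MeasurableSpace T] [PseudoMetricSpace E]
    [SecondCountableTopology E] [MeasurableSpace E] [BorelSpace E] {x : ℕ → E} (hx : DenseRange x)
    (u : ℕ → T → E) (hu : ∀ n, Measurable (u n))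
    (hcpt : ∀ t, IsCompact (closure (Set.range fun n => u n t))) :
    ∃ η : ℕ → T → ℕ, ∃ v : T → E,
      (∀ k, Measurable (η k)) ∧ Measurable v ∧
      ∀ t, StrictMono (fun k => η k t) ∧
        Tendsto (fun k => u (η k t) t) atTop (𝓝 (v t)) := by
  choose v hv using fun t => exists_tendsto_comp_subseqIndex (hcpt t) hx
  refine ⟨fun k t => subseqIndex (fun n => u n t) x k, v, measurable_subseqIndex hu, ?_,
    fun t => ⟨strictMono_subseqIndex (hcpt t) hx, hv t⟩⟩
  have hu' : Measurable fun p : T × ℕ => u p.2 p.1 := measurable_from_prod_countable_left hu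
  exact measurable_of_tendsto_metrizable
    (fun k => hu'.comp (measurable_id.prodMk (measurable_subseqIndex hu k))) (tendsto_pi_nhds.2 hv)

/-- Let (T, 𝒯) be a measurable space, E a Polish space, and u_n : T → E a sequence of
𝒯-measurable maps such that for every t the set {u_n(t) : n ∈ ℕ} has compact closure in E.
Then there exist 𝒯-measurable functions η_k : T → ℕ such that, for every t, the numbers
η_k(t) are strictly increasing in k, the sequence u_{η_k(t)}(t) converges in E to some
point u(t), and the map t ↦ u(t) is 𝒯-measurable. -/
theorem stmt18 {T E : Type*} [MeasurableSpace T]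
    [TopologicalSpace E] [PolishSpace E] [MeasurableSpace E] [BorelSpace E]
    (u : ℕ → T → E) (hu : ∀ n, Measurable (u n))
    (hcpt : ∀ t, IsCompact (closure (Set.range fun n => u n t))) :
    ∃ η : ℕ → T → ℕ, ∃ v : T → E,
      (∀ k, Measurable (η k)) ∧ Measurable v ∧
      ∀ t, StrictMono (fun k => η k t) ∧
        Tendsto (fun k => u (η k t) t) atTop (nhds (v t)) := by
  obtain hT | ⟨⟨t₀⟩⟩ := isEmpty_or_nonempty T
  · exact ⟨fun k _ => k, u 0, fun _ => measurable_const, hu 0, isEmptyElim⟩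
  · have : Nonempty E := ⟨u 0 t₀⟩
    let := TopologicalSpace.pseudoMetrizableSpacePseudoMetric E
    exact exists_measurable_subseq_tendsto (TopologicalSpace.denseRange_denseSeq E) u hu hcpt
end
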